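/- Let K be a field of characteristic zero, let η ∈ K be nonzero and not a root of unity, and let A = A_η = A(1+η, −η, 1) with ε = (η−1)⁻¹ and w = −ud + du + ε. Let N = A/A(d−1). Then every nonzero A-submodule U of N contains the image of w^m in N for some m ≥ 0. -/

import Mathlib

universe u

noncomputable section

/-- The defining relations `d²u = α·dud + β·ud² + γ·d` and `du² = α·udu + β·u²d + γ·u`
of the down-up algebra `A(α,β,γ)`, as a relation on the free algebra on two generators
(`0 ↦ d`, `1 ↦ u`). -/
def duRel (K : Type u) [Field K] (α β γ : K) :
    FreeAlgebra K (Fin 2) → FreeAlgebra K (Fin 2) → Prop := fun X Y =>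
  (X = FreeAlgebra.ι K (0 : Fin 2) * FreeAlgebra.ι K (0 : Fin 2) * FreeAlgebra.ι K (1 : Fin 2) ∧
   Y = α • (FreeAlgebra.ι K (0 : Fin 2) * FreeAlgebra.ι K (1 : Fin 2) * FreeAlgebra.ι K (0 : Fin 2)) +
       β • (FreeAlgebra.ι K (1 : Fin 2) * FreeAlgebra.ι K (0 : Fin 2) * FreeAlgebra.ι K (0 : Fin 2)) +
       γ • FreeAlgebra.ι K (0 : Fin 2)) ∨
  (X = FreeAlgebra.ι K (0 : Fin 2) * FreeAlgebra.ι K (1 : Fin 2) * FreeAlgebra.ι K (1 : Fin 2) ∧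
   Y = α • (FreeAlgebra.ι K (1 : Fin 2) * FreeAlgebra.ι K (0 : Fin 2) * FreeAlgebra.ι K (1 : Fin 2)) +
       β • (FreeAlgebra.ι K (1 : Fin 2) * FreeAlgebra.ι K (1 : Fin 2) * FreeAlgebra.ι K (0 : Fin 2)) +
       γ • FreeAlgebra.ι K (1 : Fin 2))

abbrev DownUp (K : Type u) [Field K] (α β γ : K) := RingQuot (duRel K α β γ)

def duD (K : Type u) [Field K] (α β γ : K) : DownUp K α β γ :=
  RingQuot.mkAlgHom K (duRel K α β γ) (FreeAlgebra.ι K (0 : Fin 2))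

def duU (K : Type u) [Field K] (α β γ : K) : DownUp K α β γ :=
  RingQuot.mkAlgHom K (duRel K α β γ) (FreeAlgebra.ι K (1 : Fin 2))

/-- The normal element `w = −ud + du + ε` of `A_η = A(1+η, −η, 1)`, with `ε = (η−1)⁻¹`. -/
def duW (K : Type u) [Field K] (η : K) : DownUp K (1 + η) (-η) 1 :=
  -(duU K (1 + η) (-η) 1 * duD K (1 + η) (-η) 1) +
    duD K (1 + η) (-η) 1 * duU K (1 + η) (-η) 1 +
    algebraMap K (DownUp K (1 + η) (-η) 1) ((η - 1)⁻¹)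

/-!
The quotient `N = A/A(d - 1)` has basis `ūⁱ w̄ʲ`, and we build it concretely on `ℕ × ℕ →₀ K`:
explicit operators `d, u` satisfy `dw = η wd` and `wu = η uw` for `w = -ud + du + ε`, which are
equivalent to the defining relations of `A_η`, so they give a representation `ρ` of `A`. The map
`a ↦ ρ(a) e(0, 0)` kills exactly `A(d - 1)`, because the `uⁱ wʲ` span `A` modulo `A(d - 1)`.

In this model `d` never raises the level `i`, and it acts on the top level of a vector by
`e(i, j) ↦ ηʲ e(i, j)`. Hence every nonzero vector is killed by a product of factors `d - ηʲ`, and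
a partial product sends it to an eigenvector of `d`. As `η` is not a root of unity and
`char K = 0`, the eigenvectors of `d` are the multiples of the vectors `e(0, m) = w̄ᵐ`. So every
nonzero `x ∈ U` has a multiple `b x = w̄ᵐ`.
-/

open Polynomial

theorem mul_pow_eq_smul_pow_mul {K R : Type*} [CommSemiring K] [Semiring R] [Algebra K R]
    {a b : R} {c : K} (h : a * b = c • (b * a)) (n : ℕ) : a * b ^ n = c ^ n • (b ^ n * a) := by
  induction n with
  | zero => simp
  | succ n ih =>
    rw [pow_succ, ← mul_assoc, ih, smul_mul_assoc, mul_assoc, h, mul_smul_comm, smul_smul,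
      ← mul_assoc, ← pow_succ, ← pow_succ]

theorem pow_right_inj_of_pow_ne_one {G₀ : Type*} [GroupWithZero G₀] {a : G₀} (ha₀ : a ≠ 0)
    (ha : ∀ n : ℕ, 0 < n → a ^ n ≠ 1) {m n : ℕ} : a ^ m = a ^ n ↔ m = n := by
  have h : orderOf (Units.mk0 a ha₀) = 0 := by
    rw [← orderOf_units, Units.val_mk0]
    exact orderOf_eq_zero_iff'.mpr ha
  rw [← pow_inj_iff_of_orderOf_eq_zero h, Units.ext_iff, Units.val_pow_eq_pow_val,
    Units.val_pow_eq_pow_val, Units.val_mk0]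

theorem Module.End.exists_hasEigenvector_aeval_of_aeval_prod_eq_zero {R M : Type*} [CommRing R]
    [AddCommGroup M] [Module R M] (f : Module.End R M) {v : M} (hv : v ≠ 0) (s : Multiset R)
    (hs : aeval f (s.map fun μ => X - C μ).prod v = 0) :
    ∃ μ ∈ s, ∃ q : R[X], f.HasEigenvector μ (aeval f q v) := by
  induction s using Multiset.induction_on generalizing v with
  | empty => simp [hv] at hs
  | cons μ s ih =>
    rw [Multiset.map_cons, Multiset.prod_cons, mul_comm, map_mul, Module.End.mul_apply] at hs
    by_cases h : aeval f (X - C μ) v = 0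
    · refine ⟨μ, Multiset.mem_cons_self _ _, 1, ?_⟩
      rw [map_one, Module.End.one_apply]
      refine Module.End.hasEigenvector_iff.mpr ⟨Module.End.mem_eigenspace_iff.mpr ?_, hv⟩
      simpa [sub_eq_zero] using h
    · obtain ⟨ν, hν, q, hq⟩ := ih h hs
      refine ⟨ν, Multiset.mem_cons_of_mem hν, q * (X - C μ), ?_⟩
      rwa [map_mul, Module.End.mul_apply]

section NormalElement

variable {K R : Type*} [Field K] [Ring R] [Algebra K R] {η : K}

def wOf (η : K) (d u : R) : R := -(u * d) + d * u + algebraMap K R (η - 1)⁻¹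

theorem d_mul_wOf_eq_iff (hη₁ : η ≠ 1) (d u : R) :
    d * wOf η d u = η • (wOf η d u * d) ↔
      d * d * u = (1 + η) • (d * u * d) + (-η) • (u * d * d) + d := by
  have key : d * wOf η d u - η • (wOf η d u * d) =
      d * d * u - ((1 + η) • (d * u * d) + (-η) • (u * d * d) + d) := by
    simp only [wOf, Algebra.algebraMap_eq_smul_one, mul_add, add_mul, mul_neg, neg_mul,
      mul_smul_comm, smul_mul_assoc, mul_one, one_mul, mul_assoc]
    match_scalars <;> field_simp [sub_ne_zero.mpr hη₁] <;> ring
  rw [← sub_eq_zero, key, sub_eq_zero]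

theorem wOf_mul_u_eq_iff (hη₁ : η ≠ 1) (d u : R) :
    wOf η d u * u = η • (u * wOf η d u) ↔
      d * u * u = (1 + η) • (u * d * u) + (-η) • (u * u * d) + u := by
  have key : wOf η d u * u - η • (u * wOf η d u) =
      d * u * u - ((1 + η) • (u * d * u) + (-η) • (u * u * d) + u) := by
    simp only [wOf, Algebra.algebraMap_eq_smul_one, mul_add, add_mul, mul_neg, neg_mul,
      mul_smul_comm, smul_mul_assoc, mul_one, one_mul, mul_assoc]
    match_scalars <;> field_simp [sub_ne_zero.mpr hη₁] <;> ring
  rw [← sub_eq_zero, key, sub_eq_zero]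

end NormalElement

namespace DownUp

open Finsupp (single linearCombination)

variable {K : Type u} [Field K] {η : K}

local notation "𝔸" => DownUp K (1 + η) (-η) 1
local notation "𝐝" => duD K (1 + η) (-η) 1
local notation "𝐮" => duU K (1 + η) (-η) 1
local notation "𝐰" => duW K η
local notation "𝐈" => Ideal.span {duD K (1 + η) (-η) 1 - 1}

theorem duD_mul_duD_mul_duU {α β γ : K} :
    duD K α β γ * duD K α β γ * duU K α β γ = α • (duD K α β γ * duU K α β γ * duD K α β γ)
      + β • (duU K α β γ * duD K α β γ * duD K α β γ) + γ • duD K α β γ := by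
  simpa only [duD, duU, map_mul, map_add, map_smul] using
    RingQuot.mkAlgHom_rel K (s := duRel K α β γ) (Or.inl ⟨rfl, rfl⟩)

theorem duD_mul_duU_mul_duU {α β γ : K} :
    duD K α β γ * duU K α β γ * duU K α β γ = α • (duU K α β γ * duD K α β γ * duU K α β γ)
      + β • (duU K α β γ * duU K α β γ * duD K α β γ) + γ • duU K α β γ := by
  simpa only [duD, duU, map_mul, map_add, map_smul] using
    RingQuot.mkAlgHom_rel K (s := duRel K α β γ) (Or.inr ⟨rfl, rfl⟩)

theorem duD_mul_duW (hη₁ : η ≠ 1) : 𝐝 * 𝐰 = η • (𝐰 * 𝐝) :=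
  (d_mul_wOf_eq_iff hη₁ _ _).mpr (by rw [duD_mul_duD_mul_duU, one_smul])

theorem duW_mul_duU (hη₁ : η ≠ 1) : 𝐰 * 𝐮 = η • (𝐮 * 𝐰) :=
  (wOf_mul_u_eq_iff hη₁ _ _).mpr (by rw [duD_mul_duU_mul_duU, one_smul])

variable (η) in
def uw (p : ℕ × ℕ) : 𝔸 := 𝐮 ^ p.1 * 𝐰 ^ p.2

variable (η) in
def spanUW : Submodule K 𝔸 := Submodule.span K (Set.range (uw η)) ⊔ 𝐈.restrictScalars K

theorem uw_mem_spanUW (p : ℕ × ℕ) : uw η p ∈ spanUW η :=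
  Submodule.mem_sup_left (Submodule.subset_span ⟨p, rfl⟩)

theorem mul_mem_spanUW {x : 𝔸} (hx : ∀ p, x * uw η p ∈ spanUW η) {s : 𝔸}
    (hs : s ∈ spanUW η) : x * s ∈ spanUW η := by
  suffices spanUW η ≤ (spanUW η).comap (LinearMap.mulLeft K x) from this hs
  refine sup_le (Submodule.span_le.mpr (Set.range_subset_iff.mpr hx)) fun z hz => ?_
  exact Submodule.mem_sup_right (Ideal.mul_mem_left _ x hz)

theorem duU_mul_mem_spanUW {s : 𝔸} (hs : s ∈ spanUW η) : 𝐮 * s ∈ spanUW η := by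
  refine mul_mem_spanUW (fun p => ?_) hs
  rw [uw, ← mul_assoc, ← pow_succ']
  exact uw_mem_spanUW (p.1 + 1, p.2)

theorem duD_mul_uw_mem_spanUW (hη₁ : η ≠ 1) (p : ℕ × ℕ) : 𝐝 * uw η p ∈ spanUW η := by
  obtain ⟨i, j⟩ := p
  induction i with
  | zero =>
    have : 𝐝 * uw η (0, j) = η ^ j • (uw η (0, j) * (𝐝 - 1) + uw η (0, j)) := by
      rw [uw, pow_zero, one_mul, mul_pow_eq_smul_pow_mul (duD_mul_duW hη₁), mul_sub, mul_one,
        sub_add_cancel]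
    rw [this]
    refine Submodule.smul_mem _ _ (Submodule.add_mem _ ?_ (uw_mem_spanUW _))
    exact Submodule.mem_sup_right (Ideal.mul_mem_left _ _ (Submodule.mem_span_singleton_self _))
  | succ i ih =>
    have hdu : 𝐝 * 𝐮 = 𝐰 + 𝐮 * 𝐝 - algebraMap K 𝔸 (η - 1)⁻¹ := by rw [duW]; abel
    have hwu : 𝐰 * 𝐮 ^ i = η ^ i • (𝐮 ^ i * 𝐰) := mul_pow_eq_smul_pow_mul (duW_mul_duU hη₁) i
    have : 𝐝 * uw η (i + 1, j) =
        η ^ i • uw η (i, j + 1) + 𝐮 * (𝐝 * uw η (i, j)) - (η - 1)⁻¹ • uw η (i, j) := calc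
      _ = (𝐝 * 𝐮) * 𝐮 ^ i * 𝐰 ^ j := by rw [uw, pow_succ', mul_assoc, mul_assoc, mul_assoc]
      _ = (𝐰 * 𝐮 ^ i) * 𝐰 ^ j + 𝐮 * (𝐝 * (𝐮 ^ i * 𝐰 ^ j))
          - algebraMap K 𝔸 (η - 1)⁻¹ * (𝐮 ^ i * 𝐰 ^ j) := by
        rw [hdu]; simp only [sub_mul, add_mul, mul_assoc]
      _ = _ := by rw [hwu, smul_mul_assoc, mul_assoc, ← pow_succ', ← Algebra.smul_def]; rfl
    rw [this]
    exact Submodule.sub_mem _ (Submodule.add_mem _ (Submodule.smul_mem _ _ (uw_mem_spanUW _))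
      (duU_mul_mem_spanUW ih)) (Submodule.smul_mem _ _ (uw_mem_spanUW _))

theorem mem_spanUW (hη₁ : η ≠ 1) (a : 𝔸) : a ∈ spanUW η := by
  suffices ∀ b s, s ∈ spanUW η → RingQuot.mkAlgHom K (duRel K (1 + η) (-η) 1) b * s ∈ spanUW η by
    obtain ⟨b, rfl⟩ := RingQuot.mkAlgHom_surjective K (duRel K (1 + η) (-η) 1) a
    simpa using this b 1 (by simpa [uw] using uw_mem_spanUW (η := η) (0, 0))
  intro b
  induction b using FreeAlgebra.induction with
  | grade0 r =>
    intro s hs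
    rw [AlgHom.commutes, ← Algebra.smul_def]
    exact Submodule.smul_mem _ _ hs
  | grade1 x =>
    intro s hs
    fin_cases x
    · exact mul_mem_spanUW (duD_mul_uw_mem_spanUW hη₁) hs
    · exact duU_mul_mem_spanUW hs
  | mul x y hx hy =>
    intro s hs
    rw [map_mul, mul_assoc]
    exact hx _ (hy s hs)
  | add x y hx hy =>
    intro s hs
    rw [map_add, add_mul]
    exact Submodule.add_mem _ (hx s hs) (hy s hs)

/-- `ℕ × ℕ →₀ K` models `N`, with `single (i, j) 1` standing for `ūⁱ w̄ʲ`. Modulo `A(d - 1)`,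
`d uⁱ wʲ = ηʲ uⁱ wʲ + ε (ηⁱ - 1) uⁱ⁻¹ wʲ⁺¹ - i ε uⁱ⁻¹ wʲ`, `u uⁱ wʲ = uⁱ⁺¹ wʲ` and
`w uⁱ wʲ = ηⁱ uⁱ wʲ⁺¹`, which `dVec`, `uOp` and `wOp` transcribe. -/
def dVec (η : K) : ℕ × ℕ → ℕ × ℕ →₀ K
  | (0, j) => η ^ j • single (0, j) 1
  | (i + 1, j) => η ^ j • single (i + 1, j) 1
      + ((η - 1)⁻¹ * (η ^ (i + 1) - 1)) • single (i, j + 1) 1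
      - ((i + 1) * (η - 1)⁻¹) • single (i, j) 1

variable (η) in
def dOp : Module.End K (ℕ × ℕ →₀ K) := linearCombination K (dVec η)

variable (K) in
def uOp : Module.End K (ℕ × ℕ →₀ K) := linearCombination K fun p => single (p.1 + 1, p.2) 1

variable (η) in
def wOp : Module.End K (ℕ × ℕ →₀ K) :=
  linearCombination K fun p => η ^ p.1 • single (p.1, p.2 + 1) 1

theorem wOf_dOp_uOp (hη₁ : η ≠ 1) : wOf η (dOp η) (uOp K) = wOp η := by
  ext ⟨_ | i, j⟩ : 2 <;>
  · simp only [wOf, dOp, uOp, wOp, dVec, Algebra.algebraMap_eq_smul_one, LinearMap.comp_apply,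
      Finsupp.lsingle_apply, LinearMap.add_apply, LinearMap.neg_apply, LinearMap.smul_apply,
      Module.End.mul_apply, Module.End.one_apply, Finsupp.linearCombination_single, map_add,
      map_sub, map_smul, smul_add, smul_sub, smul_smul]
    match_scalars <;> field_simp [sub_ne_zero.mpr hη₁] <;> ring

theorem dOp_mul_wOp (hη₁ : η ≠ 1) : dOp η * wOp η = η • (wOp η * dOp η) := by
  ext ⟨_ | i, j⟩ : 2 <;>
  · simp only [dOp, wOp, dVec, LinearMap.comp_apply, Finsupp.lsingle_apply, LinearMap.smul_apply,
      Module.End.mul_apply, Finsupp.linearCombination_single, map_add, map_sub, map_smul,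
      smul_add, smul_sub, smul_smul]
    match_scalars <;> field_simp [sub_ne_zero.mpr hη₁] <;> ring

theorem wOp_mul_uOp : wOp η * uOp K = η • (uOp K * wOp η) := by
  ext p : 2
  simp only [uOp, wOp, LinearMap.comp_apply, Finsupp.lsingle_apply, LinearMap.smul_apply,
    Module.End.mul_apply, Finsupp.linearCombination_single, map_smul, smul_smul]
  match_scalars
  ring

def rep (hη₁ : η ≠ 1) : 𝔸 →ₐ[K] Module.End K (ℕ × ℕ →₀ K) :=
  RingQuot.liftAlgHom K ⟨FreeAlgebra.lift K ![dOp η, uOp K], by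
    rintro x y (⟨rfl, rfl⟩ | ⟨rfl, rfl⟩) <;>
      simp only [map_mul, map_add, map_smul, FreeAlgebra.lift_ι_apply, Matrix.cons_val_zero,
        Matrix.cons_val_one, one_smul]
    · exact (d_mul_wOf_eq_iff hη₁ _ _).mp (by rw [wOf_dOp_uOp hη₁]; exact dOp_mul_wOp hη₁)
    · exact (wOf_mul_u_eq_iff hη₁ _ _).mp (by rw [wOf_dOp_uOp hη₁]; exact wOp_mul_uOp)⟩

section Coordinates

variable (hη₁ : η ≠ 1)

theorem rep_duD : rep hη₁ 𝐝 = dOp η := by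
  simp [rep, duD, RingQuot.liftAlgHom_mkAlgHom_apply]

theorem rep_duU : rep hη₁ 𝐮 = uOp K := by
  simp [rep, duU, RingQuot.liftAlgHom_mkAlgHom_apply]

theorem rep_duW : rep hη₁ 𝐰 = wOp η := by
  rw [← wOf_dOp_uOp hη₁, duW, wOf, map_add, map_add, map_neg, map_mul, map_mul, AlgHom.commutes,
    rep_duD, rep_duU]

/-- The coordinates of `ā ∈ N` in the basis `ūⁱ w̄ʲ`. -/
def coeffs : 𝔸 →ₗ[K] ℕ × ℕ →₀ K :=
  (LinearMap.applyₗ (single (0, 0) 1)).comp (rep hη₁).toLinearMap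

theorem coeffs_mul (a b : 𝔸) : coeffs hη₁ (a * b) = rep hη₁ a (coeffs hη₁ b) := by
  simp [coeffs]

theorem coeffs_duW_pow (m : ℕ) : coeffs hη₁ (𝐰 ^ m) = single (0, m) 1 := by
  induction m with
  | zero => simp [coeffs]
  | succ m ih =>
    rw [pow_succ', coeffs_mul, ih, rep_duW]
    simp [wOp]

theorem coeffs_uw (p : ℕ × ℕ) : coeffs hη₁ (uw η p) = single p 1 := by
  obtain ⟨i, j⟩ := p
  induction i with
  | zero => simpa [uw] using coeffs_duW_pow hη₁ j
  | succ i ih =>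
    simp only [uw] at ih ⊢
    rw [pow_succ', mul_assoc, coeffs_mul, ih, rep_duU]
    simp [uOp]

theorem coeffs_linearCombination_uw (c : ℕ × ℕ →₀ K) :
    coeffs hη₁ (linearCombination K (uw η) c) = c := by
  induction c using Finsupp.induction_linear with
  | zero => simp
  | add f g hf hg => rw [map_add, map_add, hf, hg]
  | single p c =>
    rw [Finsupp.linearCombination_single, map_smul, coeffs_uw, Finsupp.smul_single_one]

theorem coeffs_eq_zero_iff {a : 𝔸} : coeffs hη₁ a = 0 ↔ a ∈ 𝐈 := by
  have coeffs_of_mem {z : 𝔸} (hz : z ∈ 𝐈) : coeffs hη₁ z = 0 := by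
    obtain ⟨b, rfl⟩ := Submodule.mem_span_singleton.mp hz
    simp [coeffs, rep_duD, dOp, dVec]
  refine ⟨fun h => ?_, coeffs_of_mem⟩
  obtain ⟨y, hy, z, hz, rfl⟩ := Submodule.mem_sup.mp (mem_spanUW hη₁ a)
  rw [← Finsupp.range_linearCombination] at hy
  obtain ⟨c, rfl⟩ := hy
  rw [map_add, coeffs_linearCombination_uw, coeffs_of_mem hz, add_zero] at h
  simpa [h] using hz

end Coordinates

theorem dOp_apply (v : ℕ × ℕ →₀ K) (a b : ℕ) :
    dOp η v (a, b) = η ^ b * v (a, b)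
      + (if b = 0 then 0 else (η - 1)⁻¹ * (η ^ (a + 1) - 1) * v (a + 1, b - 1))
      - (a + 1) * (η - 1)⁻¹ * v (a + 1, b) := by
  induction v using Finsupp.induction_linear with
  | zero => simp
  | add f g hf hg =>
    simp only [map_add, Finsupp.add_apply, hf, hg]
    split_ifs <;> ring
  | single p c =>
    obtain ⟨_ | i, j⟩ := p <;> obtain _ | b := b <;>
      simp only [dOp, dVec, Finsupp.linearCombination_single, Finsupp.smul_apply,
        Finsupp.add_apply, Finsupp.sub_apply, Finsupp.single_apply, Prod.mk.injEq, smul_eq_mul] <;>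
      split_ifs <;> first | ring1 | (simp_all; try ring1)

variable (K) in
abbrev belowLevel (n : ℕ) : Submodule K (ℕ × ℕ →₀ K) := Finsupp.supported K K {p | p.1 < n}

theorem exists_top_level {v : ℕ × ℕ →₀ K} (hv : v ≠ 0) :
    ∃ n, v ∈ belowLevel K (n + 1) ∧ ∃ j, v (n, j) ≠ 0 := by
  obtain ⟨p, hp, hmax⟩ :=
    Finset.exists_mem_eq_sup v.support (Finsupp.support_nonempty_iff.mpr hv) Prod.fst
  exact ⟨p.1, fun q hq => Nat.lt_succ_of_le (hmax ▸ Finset.le_sup hq), p.2,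
    Finsupp.mem_support_iff.mp hp⟩

theorem dOp_mem_belowLevel {n : ℕ} {v : ℕ × ℕ →₀ K} (hv : v ∈ belowLevel K n) :
    dOp η v ∈ belowLevel K n := by
  rw [Finsupp.mem_supported'] at hv ⊢
  rintro ⟨a, b⟩ (ha : ¬a < n)
  rw [dOp_apply, hv _ ha, hv (a + 1, b) (by simp; omega), hv (a + 1, b - 1) (by simp; omega)]
  simp

theorem dOp_apply_top {n : ℕ} {v : ℕ × ℕ →₀ K} (hv : v ∈ belowLevel K (n + 1)) (j : ℕ) :
    dOp η v (n, j) = η ^ j * v (n, j) := by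
  rw [Finsupp.mem_supported'] at hv
  rw [dOp_apply, hv (n + 1, j) (by simp), hv (n + 1, j - 1) (by simp)]
  simp

theorem aeval_dOp_apply_top (q : K[X]) {n : ℕ} {v : ℕ × ℕ →₀ K}
    (hv : v ∈ belowLevel K (n + 1)) :
    aeval (dOp η) q v ∈ belowLevel K (n + 1) ∧
      ∀ j, aeval (dOp η) q v (n, j) = q.eval (η ^ j) * v (n, j) := by
  induction q using Polynomial.induction_on generalizing v with
  | C a =>
    rw [aeval_C, Module.algebraMap_end_apply]
    exact ⟨Submodule.smul_mem _ _ hv, fun j => by rw [eval_C, Finsupp.smul_apply, smul_eq_mul]⟩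
  | add p q hp hq =>
    obtain ⟨hp₁, hp₂⟩ := hp hv
    obtain ⟨hq₁, hq₂⟩ := hq hv
    rw [map_add, LinearMap.add_apply]
    refine ⟨Submodule.add_mem _ hp₁ hq₁, fun j => ?_⟩
    rw [Finsupp.add_apply, hp₂, hq₂, eval_add, add_mul]
  | monomial k a ih =>
    obtain ⟨h₁, h₂⟩ := ih (dOp_mem_belowLevel hv)
    have : aeval (dOp η) (C a * X ^ (k + 1)) v = aeval (dOp η) (C a * X ^ k) (dOp η v) := by
      rw [pow_succ, ← mul_assoc, map_mul, aeval_X, Module.End.mul_apply]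
    refine this ▸ ⟨h₁, fun j => ?_⟩
    rw [h₂, dOp_apply_top hv]
    simp only [eval_mul, eval_C, eval_pow, eval_X]
    ring

theorem exists_aeval_dOp_prod_eq_zero (n : ℕ) {v : ℕ × ℕ →₀ K} (hv : v ∈ belowLevel K n) :
    ∃ s : Multiset ℕ, aeval (dOp η) (s.map fun j => X - C (η ^ j)).prod v = 0 := by
  induction n generalizing v with
  | zero =>
    refine ⟨0, ?_⟩
    rw [Multiset.map_zero, Multiset.prod_zero, map_one, Module.End.one_apply]
    exact Finsupp.ext fun p => (Finsupp.mem_supported' K v).mp hv p (Nat.not_lt_zero _)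
  | succ n ih =>
    let J := v.support.image Prod.snd
    let P : K[X] := ∏ j ∈ J, (X - C (η ^ j))
    obtain ⟨hP₁, hP₂⟩ := aeval_dOp_apply_top P hv
    have hPv : aeval (dOp η) P v ∈ belowLevel K n := by
      rw [Finsupp.mem_supported']
      rintro ⟨a, j⟩ (ha : ¬a < n)
      obtain rfl | ha' := (Nat.le_of_not_lt ha).eq_or_lt
      · rw [hP₂]
        by_cases hvj : v (n, j) = 0
        · rw [hvj, mul_zero]
        · rw [eval_prod, Finset.prod_eq_zero (Finset.mem_image_of_mem Prod.snd
            (Finsupp.mem_support_iff.mpr hvj)) (by simp), zero_mul]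
      · exact (Finsupp.mem_supported' K _).mp hP₁ (a, j) (by simp; omega)
    obtain ⟨s, hs⟩ := ih hPv
    refine ⟨s + J.val, ?_⟩
    rwa [Multiset.map_add, Multiset.prod_add, map_mul, Module.End.mul_apply]

theorem eq_single_of_hasEigenvector [CharZero K] (hη₀ : η ≠ 0)
    (hη : ∀ n : ℕ, 0 < n → η ^ n ≠ 1) {v : ℕ × ℕ →₀ K} {m : ℕ}
    (h : (dOp η).HasEigenvector (η ^ m) v) : ∃ c ≠ 0, v = single (0, m) c := by
  obtain ⟨hvm, hv⟩ := Module.End.hasEigenvector_iff.mp h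
  have hDv := Module.End.mem_eigenspace_iff.mp hvm
  obtain ⟨n, hn, j, hj⟩ := exists_top_level hv
  have top_eq (j : ℕ) (hj : v (n, j) ≠ 0) : j = m := by
    refine (pow_right_inj_of_pow_ne_one hη₀ hη).mp (mul_right_cancel₀ hj ?_)
    rw [← dOp_apply_top hn, hDv, Finsupp.smul_apply, smul_eq_mul]
  obtain rfl := top_eq j hj
  obtain rfl : n = 0 := by
    obtain _ | k := n
    · rfl
    -- the `(k, j)` coefficient of `d v = ηʲ v` reads `(k + 1) ε v (k + 1, j) = 0`
    have hk := congrArg (· (k, j)) hDv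
    simp only [dOp_apply, Finsupp.smul_apply, smul_eq_mul] at hk
    have hlow : (if j = 0 then 0 else (η - 1)⁻¹ * (η ^ (k + 1) - 1) * v (k + 1, j - 1)) = 0 := by
      split_ifs with hj₀
      · rfl
      · rw [not_imp_comm.mp (top_eq (j - 1)) (by omega), mul_zero]
    have hε : (η - 1)⁻¹ ≠ 0 := inv_ne_zero (sub_ne_zero.mpr (by simpa using hη 1 one_pos))
    have := mul_ne_zero (mul_ne_zero (Nat.cast_add_one_ne_zero k) hε) hj
    exact absurd (by rw [hlow] at hk; linear_combination -hk) this
  refine ⟨v (0, j), hj, Finsupp.support_subset_singleton.mp fun p hp => ?_⟩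
  have hp₀ : p.1 = 0 := Nat.lt_one_iff.mp (hn hp)
  rw [Finset.mem_singleton, Prod.ext_iff, hp₀, top_eq p.2 (hp₀ ▸ Finsupp.mem_support_iff.mp hp)]
  exact ⟨rfl, rfl⟩

theorem exists_rep_apply_eq_single [CharZero K] (hη₁ : η ≠ 1) (hη₀ : η ≠ 0)
    (hη : ∀ n : ℕ, 0 < n → η ^ n ≠ 1) {v : ℕ × ℕ →₀ K} (hv : v ≠ 0) :
    ∃ (b : 𝔸) (m : ℕ), rep hη₁ b v = single (0, m) 1 := by
  obtain ⟨n, hn, -⟩ := exists_top_level hv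
  obtain ⟨s, hs⟩ := exists_aeval_dOp_prod_eq_zero (n + 1) hn
  obtain ⟨μ, hμ, q, hq⟩ := (dOp η).exists_hasEigenvector_aeval_of_aeval_prod_eq_zero hv
    (s.map (η ^ ·)) (by rwa [Multiset.map_map])
  obtain ⟨m, -, rfl⟩ := Multiset.mem_map.mp hμ
  obtain ⟨c, hc, hqv⟩ := eq_single_of_hasEigenvector hη₀ hη hq
  refine ⟨algebraMap K 𝔸 c⁻¹ * aeval 𝐝 q, m, ?_⟩
  rw [map_mul, AlgHom.commutes, ← aeval_algHom_apply, rep_duD, Module.End.mul_apply, hqv,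
    Module.algebraMap_end_apply, Finsupp.smul_single, smul_eq_mul, inv_mul_cancel₀ hc]

end DownUp

/-- Lemma 4.6: in `A = A_η = A(1+η, −η, 1)` with `η` nonzero and not a
root of unity, `ε = (η−1)⁻¹` and `w = −ud + du + ε`, every nonzero submodule `U` of
`N = A/A(d−1)` contains the image of `w^m` for some `m ≥ 0`. -/
theorem downUp_submodule_contains_w_power {K : Type u} [Field K] [CharZero K]
    (η : K) (hη0 : η ≠ 0) (hη : ∀ n : ℕ, 0 < n → η ^ n ≠ 1)
    (U : Submodule (DownUp K (1 + η) (-η) 1)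
      (DownUp K (1 + η) (-η) 1 ⧸ (Ideal.span {duD K (1 + η) (-η) 1 - 1})))
    (hU : U ≠ ⊥) :
    ∃ m : ℕ, (Ideal.span {duD K (1 + η) (-η) 1 - 1}).mkQ ((duW K η) ^ m) ∈ U := by
  open DownUp in
  have hη₁ : η ≠ 1 := by simpa using hη 1 one_pos
  obtain ⟨x, hxU, hx⟩ := (Submodule.ne_bot_iff U).mp hU
  obtain ⟨a, rfl⟩ := Submodule.mkQ_surjective _ x
  have ha : coeffs hη₁ a ≠ 0 :=
    fun h => hx ((Submodule.Quotient.mk_eq_zero _).mpr ((coeffs_eq_zero_iff hη₁).mp h))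
  obtain ⟨b, m, hb⟩ := exists_rep_apply_eq_single hη₁ hη0 hη ha
  have hba : b * a - duW K η ^ m ∈ Ideal.span {duD K (1 + η) (-η) 1 - 1} := by
    rw [← coeffs_eq_zero_iff hη₁, map_sub, coeffs_mul, hb, coeffs_duW_pow, sub_self]
  refine ⟨m, ?_⟩
  rw [Submodule.mkQ_apply, ← (Submodule.Quotient.eq _).mpr hba, ← smul_eq_mul,
    Submodule.Quotient.mk_smul]
  exact U.smul_mem b hxU

end
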